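/- arXiv:1904.06053 — 3 statements merged into one kernel-verified Lean document; each statement's English description precedes it below -/
import Mathlib

section
/- If $V:\mathbb{R}^d \to \mathbb{R}$ is a convex function such that $\int e^{V(x)} \gamma_d(dx) = 1$ where $\gamma_d$ is the standard Gaussian measure, then $\max(V(x),0) \leq |x|^2/2$ for all $x \in \mathbb{R}^d$. -/
open MeasureTheory Real
open scoped NNReal ENNReal

noncomputable def stdGaussian (d : ℕ) : Measure (EuclideanSpace ℝ (Fin d)) :=
  volume.withDensity (fun x => ENNReal.ofReal ((2 * π) ^ (-(d : ℝ) / 2) * Real.exp (-‖x‖ ^ 2 / 2)))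

open Complex in
open scoped RealInnerProductSpace in
lemma gauss_lin_integral (d : ℕ) (w : EuclideanSpace ℝ (Fin d)) :
    ∫ v : EuclideanSpace ℝ (Fin d), Real.exp (-(1/2) * ‖v‖^2 + ⟪w, v⟫) =
      (2 * π) ^ ((d : ℝ) / 2) * Real.exp (‖w‖^2 / 2) := by
  have h := GaussianFourier.integral_cexp_neg_mul_sq_norm_add
    (V := EuclideanSpace ℝ (Fin d)) (b := (1/2 : ℂ)) (by norm_num) 1 w
  have hL : ∫ v : EuclideanSpace ℝ (Fin d), cexp (-(1/2 : ℂ) * ‖v‖^2 + 1 * ⟪w, v⟫)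
      = ((∫ v : EuclideanSpace ℝ (Fin d), Real.exp (-(1/2) * ‖v‖^2 + ⟪w, v⟫) : ℝ) : ℂ) := by
    have e : ∀ v : EuclideanSpace ℝ (Fin d), cexp (-(1/2 : ℂ) * ‖v‖^2 + 1 * ⟪w, v⟫)
        = ((Real.exp (-(1/2) * ‖v‖^2 + ⟪w, v⟫) : ℝ) : ℂ) := fun v => by
      rw [show (-(1/2 : ℂ) * ‖v‖^2 + 1 * (⟪w, v⟫ : ℝ)) = ((-(1/2) * ‖v‖^2 + ⟪w, v⟫ : ℝ) : ℂ) from by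
        push_cast; ring]
      exact (Complex.ofReal_exp _).symm
    simp_rw [e]
    exact integral_ofReal
  rw [hL] at h
  have hR : ((π : ℂ) / (1/2)) ^ (Module.finrank ℝ (EuclideanSpace ℝ (Fin d)) / 2 : ℂ)
      * cexp ((1:ℂ)^2 * ‖w‖^2 / (4 * (1/2)))
      = (((2 * π) ^ ((d : ℝ) / 2) * Real.exp (‖w‖^2 / 2) : ℝ) : ℂ) := by
    rw [finrank_euclideanSpace_fin]
    rw [show ((π : ℂ) / (1/2)) = ((2 * π : ℝ) : ℂ) by push_cast; ring]
    rw [show ((d : ℂ) / 2) = (((d : ℝ) / 2 : ℝ) : ℂ) by push_cast; ring]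
    rw [← Complex.ofReal_cpow (by positivity)]
    rw [show ((1:ℂ)^2 * ‖w‖^2 / (4 * (1/2))) = ((‖w‖^2/2 : ℝ) : ℂ) by push_cast; ring]
    rw [← Complex.ofReal_exp]
    push_cast
    ring
  rw [hR] at h
  exact_mod_cast h

open scoped RealInnerProductSpace in
lemma gauss_mgf (d : ℕ) (w : EuclideanSpace ℝ (Fin d)) (c : ℝ) :
    ∫ x, Real.exp (⟪w, x⟫ + c) ∂(stdGaussian d) = Real.exp (c + ‖w‖^2 / 2) := by
  have hmeas : Measurable fun x : EuclideanSpace ℝ (Fin d) =>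
      ((2 * π) ^ (-(d : ℝ) / 2) * Real.exp (-‖x‖ ^ 2 / 2)).toNNReal := by
    apply Measurable.real_toNNReal
    exact (continuous_const.mul ((continuous_norm.pow 2).neg.div_const 2).rexp).measurable
  have hsd : stdGaussian d = volume.withDensity (fun x =>
      (((((2 * π) ^ (-(d : ℝ) / 2) * Real.exp (-‖x‖ ^ 2 / 2)).toNNReal : ℝ≥0)) : ℝ≥0∞)) := rfl
  rw [hsd, integral_withDensity_eq_integral_smul hmeas]
  have e : ∀ x : EuclideanSpace ℝ (Fin d),
      (((2 * π) ^ (-(d : ℝ) / 2) * Real.exp (-‖x‖ ^ 2 / 2)).toNNReal : ℝ≥0)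
        • Real.exp (⟪w, x⟫ + c)
      = ((2 * π) ^ (-(d : ℝ) / 2) * Real.exp c) * Real.exp (-(1/2) * ‖x‖^2 + ⟪w, x⟫) := by
    intro x
    rw [NNReal.smul_def, smul_eq_mul, Real.coe_toNNReal _ (by positivity), mul_assoc,
      ← Real.exp_add, mul_assoc, ← Real.exp_add]
    congr 1
    ring
  simp_rw [e]
  rw [integral_const_mul, gauss_lin_integral]
  rw [show (2 * π) ^ (-(d : ℝ) / 2) * Real.exp c * ((2 * π) ^ ((d : ℝ) / 2)
        * Real.exp (‖w‖ ^ 2 / 2))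
      = ((2 * π) ^ (-(d : ℝ) / 2) * (2 * π) ^ ((d : ℝ) / 2)) * (Real.exp c
        * Real.exp (‖w‖ ^ 2 / 2)) by ring]
  rw [← Real.rpow_add (by positivity), ← Real.exp_add,
    show (-(d:ℝ)/2 + (d:ℝ)/2) = 0 by ring, Real.rpow_zero, one_mul]

open scoped RealInnerProductSpace in
lemma exists_subgradient (d : ℕ) (V : EuclideanSpace ℝ (Fin d) → ℝ)
    (hV : ConvexOn ℝ Set.univ V) (x₀ : EuclideanSpace ℝ (Fin d)) :
    ∃ g : EuclideanSpace ℝ (Fin d), ∀ y, V x₀ + ⟪g, y - x₀⟫ ≤ V y := by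
  have hVc : Continuous V := by
    have := hV.continuousOn isOpen_univ
    rwa [continuousOn_univ] at this
  set S : Set (EuclideanSpace ℝ (Fin d) × ℝ) := {p | V p.1 < p.2} with hS
  have hSo : IsOpen S := by
    have : S = (fun p : EuclideanSpace ℝ (Fin d) × ℝ => V p.1 - p.2) ⁻¹' (Set.Iio 0) := by
      ext p; simp [hS, sub_neg]
    rw [this]
    exact ((hVc.comp continuous_fst).sub continuous_snd).isOpen_preimage _ isOpen_Iio
  have hSc : Convex ℝ S := by
    rintro ⟨p1, p2⟩ hp ⟨q1, q2⟩ hq a b ha hb hab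
    simp only [hS, Set.mem_setOf_eq] at hp hq ⊢
    have h1 : V (a • p1 + b • q1) ≤ a * V p1 + b * V q1 := by
      simpa [smul_eq_mul] using hV.2 (Set.mem_univ p1) (Set.mem_univ q1) ha hb hab
    have h2 : a * V p1 + b * V q1 < a * p2 + b * q2 := by
      rcases eq_or_lt_of_le ha with rfl | ha'
      · simp only [zero_mul, zero_add]
        have hb1 : b = 1 := by linarith
        simpa [hb1] using hq
      · have := mul_le_mul_of_nonneg_left hq.le hb
        have := mul_lt_mul_of_pos_left hp ha'
        linarith
    calc V (a • p1 + b • q1) ≤ a * V p1 + b * V q1 := h1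
    _ < a * p2 + b * q2 := h2
    _ = (a • (p1, p2) + b • (q1, q2)).2 := by simp
  have hx₀ : ((x₀, V x₀) : EuclideanSpace ℝ (Fin d) × ℝ) ∉ S := by simp [hS]
  obtain ⟨f, hf⟩ := geometric_hahn_banach_open_point hSc hSo hx₀
  set c : ℝ := f (0, 1) with hc
  have hdecomp : ∀ (y : EuclideanSpace ℝ (Fin d)) (t : ℝ), f (y, t) = f (y, 0) + t * c := by
    intro y t
    have h : ((y, t) : EuclideanSpace ℝ (Fin d) × ℝ)
        = (y, 0) + t • ((0 : EuclideanSpace ℝ (Fin d)), (1 : ℝ)) := by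
      simp [Prod.ext_iff]
    rw [h, map_add, f.map_smul, smul_eq_mul, hc]
  have hcneg : c < 0 := by
    have h1 : ((x₀, V x₀ + 1) : EuclideanSpace ℝ (Fin d) × ℝ) ∈ S := by simp [hS]
    have := hf _ h1
    rw [hdecomp x₀ (V x₀ + 1), hdecomp x₀ (V x₀)] at this
    nlinarith
  have key : ∀ y : EuclideanSpace ℝ (Fin d), f (y, 0) + V y * c ≤ f (x₀, 0) + V x₀ * c := by
    intro y
    by_contra hcon
    push_neg at hcon
    set B := f (y, 0) + V y * c
    set A := f (x₀, 0) + V x₀ * c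
    have hε : (0 : ℝ) < (B - A) / (-c) := by
      apply div_pos (by linarith) (by linarith)
    have hmem : ((y, V y + (B - A) / (-c)) : EuclideanSpace ℝ (Fin d) × ℝ) ∈ S := by
      simp only [hS, Set.mem_setOf_eq]
      linarith
    have := hf _ hmem
    rw [hdecomp y (V y + (B - A) / (-c)), hdecomp x₀ (V x₀)] at this
    have hcne : c ≠ 0 := ne_of_lt hcneg
    have : B + ((B - A) / (-c)) * c < A := by
      rw [show B + ((B - A) / (-c)) * c = f (y, 0) + (V y + (B - A) / (-c)) * c by ring]
      exact this
    have heq : (B - A) / (-c) * c = A - B := by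
      rw [div_mul_eq_mul_div, div_neg, mul_div_cancel_right₀ _ hcne, neg_sub]
    linarith
  -- linear functional L y = - f(y,0) / c
  set L : EuclideanSpace ℝ (Fin d) →L[ℝ] ℝ :=
    (-c)⁻¹ • (f.comp (ContinuousLinearMap.inl ℝ (EuclideanSpace ℝ (Fin d)) ℝ)) with hL
  refine ⟨(InnerProductSpace.toDual ℝ (EuclideanSpace ℝ (Fin d))).symm L, fun y => ?_⟩
  rw [InnerProductSpace.toDual_symm_apply]
  have hLy : L (y - x₀) = (-c)⁻¹ * (f (y, 0) - f (x₀, 0)) := by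
    simp [hL, ContinuousLinearMap.smul_apply, map_sub, smul_eq_mul, mul_sub]
  rw [hLy]
  have hc' : (0 : ℝ) < -c := by linarith
  have h2 : f (y, 0) - f (x₀, 0) ≤ (-c) * (V y - V x₀) := by nlinarith [key y]
  have h3 := (inv_mul_le_iff₀ hc').2 h2
  linarith

theorem stmt0 (d : ℕ) (V : EuclideanSpace ℝ (Fin d) → ℝ)
    (hV : ConvexOn ℝ Set.univ V)
    (hint : ∫ x, Real.exp (V x) ∂(stdGaussian d) = 1) :
    ∀ x, max (V x) 0 ≤ ‖x‖ ^ 2 / 2 := by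
  intro x₀
  refine max_le ?_ (by positivity)
  obtain ⟨g, hg⟩ := exists_subgradient d V hV x₀
  -- integrability of exp ∘ V
  have hVi : Integrable (fun x => Real.exp (V x)) (stdGaussian d) := by
    by_contra h
    rw [integral_undef h] at hint
    norm_num at hint
  -- compare integrals
  have hmono : ∫ x, Real.exp (inner ℝ g x + (V x₀ - inner ℝ g x₀)) ∂(stdGaussian d)
      ≤ ∫ x, Real.exp (V x) ∂(stdGaussian d) := by
    apply integral_mono_of_nonneg
    · filter_upwards with x using (Real.exp_pos _).le
    · exact hVi
    · filter_upwards with y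
      apply Real.exp_le_exp.2
      have := hg y
      rw [inner_sub_right] at this
      linarith
  rw [gauss_mgf, hint] at hmono
  have h1 : V x₀ - inner ℝ g x₀ + ‖g‖ ^ 2 / 2 ≤ 0 := by
    rw [show (1 : ℝ) = Real.exp 0 by simp] at hmono
    exact (Real.exp_le_exp.1 hmono)
  have h2 : (inner ℝ g x₀ : ℝ) ≤ ‖g‖ * ‖x₀‖ := real_inner_le_norm g x₀
  nlinarith [sq_nonneg (‖g‖ - ‖x₀‖)]
end

section
/- Let $\mu(dx) = e^{V(x)}\gamma_d(dx)$ be a probability measure with $V$ convex and $\mu$ having finite second moment. Then $V$ is integrable with respect to $\mu$, i.e. the relative entropy $H(\mu|\gamma_d) = \int V \, d\mu$ is finite. -/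
open MeasureTheory Real

/-- If `μ = e^V γ_d` is a probability measure with `V` convex and `μ` has a finite second
moment, then `V ∈ L¹(μ)`, i.e. `H(μ|γ_d) = ∫ V dμ` is finite. -/
theorem stmt1 (d : ℕ) (V : EuclideanSpace ℝ (Fin d) → ℝ)
    (hV : ConvexOn ℝ Set.univ V)
    (μ : Measure (EuclideanSpace ℝ (Fin d)))
    (hμ : μ = (stdGaussian d).withDensity (fun x => ENNReal.ofReal (Real.exp (V x))))
    (hprob : IsProbabilityMeasure μ)
    (hmom : Integrable (fun x => ‖x‖ ^ 2) μ) :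
    Integrable V μ := by
  have hVcont : Continuous V := by
    rw [← continuousOn_univ]
    exact hV.continuousOn isOpen_univ
  have h2π : (0:ℝ) < 2 * π := by positivity
  set b₀ : ℝ := (volume (Metric.closedBall (0 : EuclideanSpace ℝ (Fin d)) 1)).toReal with hb₀
  have hb₀pos : 0 < b₀ := by
    apply ENNReal.toReal_pos
    · exact (Metric.measure_closedBall_pos volume (0 : EuclideanSpace ℝ (Fin d)) one_pos).ne'
    · exact (measure_closedBall_lt_top).ne
  set C : ℝ := Real.log ((2 * π) ^ ((d : ℝ) / 2)) - Real.log b₀ with hC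
  -- the key pointwise upper bound
  have key : ∀ x₀ : EuclideanSpace ℝ (Fin d), V x₀ ≤ (‖x₀‖ + 1) ^ 2 / 2 + C := by
    intro x₀
    set B : Set (EuclideanSpace ℝ (Fin d)) := Metric.closedBall x₀ 1 with hB
    set ν : Measure (EuclideanSpace ℝ (Fin d)) := volume.restrict B with hν
    have hBmeas : MeasurableSet B := measurableSet_closedBall
    have hBcompact : IsCompact B := isCompact_closedBall _ _
    have hνuniv : ν Set.univ = volume B := by rw [hν, Measure.restrict_apply_univ]
    have hvolB : volume B = volume (Metric.closedBall (0 : EuclideanSpace ℝ (Fin d)) 1) := by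
      rw [hB, Measure.addHaar_closedBall_center]
    have hBne : volume B ≠ 0 := by
      rw [hvolB]; exact (Metric.measure_closedBall_pos volume _ one_pos).ne'
    have hBlt : volume B ≠ ⊤ := measure_closedBall_lt_top.ne
    haveI : IsFiniteMeasure ν := ⟨by rw [hνuniv]; exact hBlt.lt_top⟩
    haveI : NeZero ν := ⟨by
      intro h
      apply hBne
      rw [← hνuniv, h]; rfl⟩
    have hbB : (volume B).toReal = b₀ := by rw [hvolB]
    -- integrabilities on B
    have hid_int : Integrable (fun y : EuclideanSpace ℝ (Fin d) => y) ν :=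
      (continuous_id.continuousOn).integrableOn_compact hBcompact
    have hV_int : Integrable V ν := (hVcont.continuousOn).integrableOn_compact hBcompact
    have heV_int : Integrable (fun y => Real.exp (V y)) ν :=
      ((Real.continuous_exp.comp hVcont).continuousOn).integrableOn_compact hBcompact
    -- the average of the identity over the ball is the center
    have havg : (⨍ y, y ∂ν) = x₀ := by
      have hmp : MeasurePreserving (fun t : EuclideanSpace ℝ (Fin d) => (x₀ + x₀) - t)
          volume volume := Measure.measurePreserving_sub_left volume _
      have hemb : MeasurableEmbedding (fun t : EuclideanSpace ℝ (Fin d) => (x₀ + x₀) - t) :=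
        (Homeomorph.subLeft (x₀ + x₀)).measurableEmbedding
      have hpre : (fun t : EuclideanSpace ℝ (Fin d) => (x₀ + x₀) - t) ⁻¹' B = B := by
        ext y
        simp only [Set.mem_preimage, hB, Metric.mem_closedBall, dist_eq_norm]
        have hy : x₀ + x₀ - y - x₀ = -(y - x₀) := by abel
        rw [hy, norm_neg]
      have hrefl : ∫ y in B, ((x₀ + x₀) - y) ∂volume = ∫ y in B, y ∂volume := by
        have := hmp.setIntegral_preimage_emb hemb (fun y => y) B
        rwa [hpre] at this
      have hsub : ∫ y in B, ((x₀ + x₀) - y) ∂volume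
          = (volume B).toReal • (x₀ + x₀) - ∫ y in B, y ∂volume := by
        rw [integral_sub (integrable_const _) hid_int, setIntegral_const]; rfl
      have hI : ∫ y in B, y ∂volume = (volume B).toReal • x₀ := by
        have h2 : (2:ℝ) • (∫ y in B, y ∂volume) = (volume B).toReal • (x₀ + x₀) := by
          rw [two_smul]
          nth_rewrite 1 [← hrefl]
          rw [hsub]; abel
        have h3 : (∫ y in B, y ∂volume) = (2:ℝ)⁻¹ • ((volume B).toReal • (x₀ + x₀)) := by
          rw [← h2, smul_smul]
          module
        rw [h3]
        module
      have hIν : (∫ y, y ∂ν) = (volume B).toReal • x₀ := by rw [hν]; exact hI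
      rw [average_eq, measureReal_def, hνuniv, hIν]
      rw [smul_smul, inv_mul_cancel₀ (by simp [ENNReal.toReal_ne_zero, hBne, hBlt]), one_smul]
    -- Jensen for V
    have j1 : V x₀ ≤ ⨍ y, V y ∂ν := by
      have := hV.map_average_le (hVcont.continuousOn) isClosed_univ
        (Filter.Eventually.of_forall fun _ => Set.mem_univ _) hid_int
        (show Integrable (V ∘ fun y => y) ν from hV_int)
      rwa [havg] at this
    -- Jensen for exp
    have j2 : Real.exp (⨍ y, V y ∂ν) ≤ ⨍ y, Real.exp (V y) ∂ν := by
      have := convexOn_exp.map_average_le (Real.continuous_exp.continuousOn) isClosed_univ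
        (Filter.Eventually.of_forall fun _ => Set.mem_univ _) hV_int
        (show Integrable (Real.exp ∘ V) ν from heV_int)
      exact this
    -- upper bound on the average of exp V
    set M : ℝ := (2 * π) ^ ((d : ℝ) / 2) * Real.exp ((‖x₀‖ + 1) ^ 2 / 2) with hM
    have hMpos : 0 < M := by positivity
    have hubint : ∫ y in B, Real.exp (V y) ∂volume ≤ M := by
      have hρmeas : Measurable (fun y : EuclideanSpace ℝ (Fin d) =>
          ENNReal.ofReal ((2 * π) ^ (-(d : ℝ) / 2) * Real.exp (-‖y‖ ^ 2 / 2))) := by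
        apply ENNReal.measurable_ofReal.comp
        fun_prop
      have hgmeas : Measurable (fun y : EuclideanSpace ℝ (Fin d) =>
          ENNReal.ofReal (Real.exp (V y))) := by
        apply ENNReal.measurable_ofReal.comp
        exact (Real.continuous_exp.comp hVcont).measurable
      have hμ2 : μ = volume.withDensity (fun y =>
          ENNReal.ofReal ((2 * π) ^ (-(d : ℝ) / 2) * Real.exp (-‖y‖ ^ 2 / 2)) *
          ENNReal.ofReal (Real.exp (V y))) := by
        rw [hμ, stdGaussian, ← withDensity_mul _ hρmeas hgmeas]
        rfl
      have hμB : μ B = ∫⁻ y in B,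
          ENNReal.ofReal ((2 * π) ^ (-(d : ℝ) / 2) * Real.exp (-‖y‖ ^ 2 / 2)) *
          ENNReal.ofReal (Real.exp (V y)) ∂volume := by
        rw [hμ2, withDensity_apply _ hBmeas]
      have hpt : ∀ y ∈ B, ENNReal.ofReal (Real.exp (V y)) ≤
          ENNReal.ofReal M *
            (ENNReal.ofReal ((2 * π) ^ (-(d : ℝ) / 2) * Real.exp (-‖y‖ ^ 2 / 2)) *
              ENNReal.ofReal (Real.exp (V y))) := by
        intro y hy
        have hynorm : ‖y‖ ≤ ‖x₀‖ + 1 := by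
          have : dist y x₀ ≤ 1 := Metric.mem_closedBall.mp hy
          calc ‖y‖ = ‖x₀ + (y - x₀)‖ := by congr 1; abel
            _ ≤ ‖x₀‖ + ‖y - x₀‖ := norm_add_le _ _
            _ ≤ ‖x₀‖ + 1 := by rw [← dist_eq_norm]; linarith
        have h1 : (1:ENNReal) ≤ ENNReal.ofReal M *
            ENNReal.ofReal ((2 * π) ^ (-(d : ℝ) / 2) * Real.exp (-‖y‖ ^ 2 / 2)) := by
          rw [← ENNReal.ofReal_mul hMpos.le]
          apply ENNReal.one_le_ofReal.mpr
          have hprod : M * ((2 * π) ^ (-(d : ℝ) / 2) * Real.exp (-‖y‖ ^ 2 / 2))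
              = Real.exp ((‖x₀‖ + 1) ^ 2 / 2 + (-‖y‖ ^ 2 / 2)) := by
            rw [hM, Real.exp_add]
            have hone : (2 * π) ^ ((d : ℝ) / 2) * (2 * π) ^ (-(d : ℝ) / 2) = 1 := by
              rw [← Real.rpow_add h2π, show (d:ℝ)/2 + -(d:ℝ)/2 = 0 by ring, Real.rpow_zero]
            calc (2 * π) ^ ((d : ℝ) / 2) * Real.exp ((‖x₀‖ + 1) ^ 2 / 2) *
                  ((2 * π) ^ (-(d : ℝ) / 2) * Real.exp (-‖y‖ ^ 2 / 2))
                = ((2 * π) ^ ((d : ℝ) / 2) * (2 * π) ^ (-(d : ℝ) / 2)) *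
                  (Real.exp ((‖x₀‖ + 1) ^ 2 / 2) * Real.exp (-‖y‖ ^ 2 / 2)) := by ring
              _ = Real.exp ((‖x₀‖ + 1) ^ 2 / 2) * Real.exp (-‖y‖ ^ 2 / 2) := by
                  rw [hone, one_mul]
          rw [hprod]
          apply Real.one_le_exp
          have : ‖y‖ ^ 2 ≤ (‖x₀‖ + 1) ^ 2 := by nlinarith [norm_nonneg y, norm_nonneg x₀]
          linarith
        calc ENNReal.ofReal (Real.exp (V y)) = 1 * ENNReal.ofReal (Real.exp (V y)) := by
              rw [one_mul]
          _ ≤ (ENNReal.ofReal M *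
              ENNReal.ofReal ((2 * π) ^ (-(d : ℝ) / 2) * Real.exp (-‖y‖ ^ 2 / 2))) *
              ENNReal.ofReal (Real.exp (V y)) := by
              exact mul_le_mul_left h1 _
          _ = _ := by rw [mul_assoc]
      have hlin : ∫⁻ y in B, ENNReal.ofReal (Real.exp (V y)) ∂volume ≤ ENNReal.ofReal M := by
        calc ∫⁻ y in B, ENNReal.ofReal (Real.exp (V y)) ∂volume
            ≤ ∫⁻ y in B, ENNReal.ofReal M *
              (ENNReal.ofReal ((2 * π) ^ (-(d : ℝ) / 2) * Real.exp (-‖y‖ ^ 2 / 2)) *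
                ENNReal.ofReal (Real.exp (V y))) ∂volume := by
              apply setLIntegral_mono (by fun_prop) hpt
          _ = ENNReal.ofReal M * μ B := by
              rw [lintegral_const_mul _ (by fun_prop), hμB]
          _ ≤ ENNReal.ofReal M * 1 := by
              exact mul_le_mul_right prob_le_one _
          _ = ENNReal.ofReal M := mul_one _
      have heq : ∫ y in B, Real.exp (V y) ∂volume
          = (∫⁻ y in B, ENNReal.ofReal (Real.exp (V y)) ∂volume).toReal := by
        rw [integral_eq_lintegral_of_nonneg_ae
          (Filter.Eventually.of_forall fun y => (Real.exp_pos _).le)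
          ((Real.continuous_exp.comp hVcont).aestronglyMeasurable)]
      rw [heq]
      calc (∫⁻ y in B, ENNReal.ofReal (Real.exp (V y)) ∂volume).toReal
          ≤ (ENNReal.ofReal M).toReal := ENNReal.toReal_mono ENNReal.ofReal_ne_top hlin
        _ = M := ENNReal.toReal_ofReal hMpos.le
    -- put together
    have havg_exp : ⨍ y, Real.exp (V y) ∂ν ≤ M / b₀ := by
      rw [average_eq, measureReal_def, hνuniv, smul_eq_mul, hbB]
      rw [div_eq_inv_mul]
      apply mul_le_mul_of_nonneg_left _ (by positivity)
      exact hubint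
    have hfinal : Real.exp (V x₀) ≤ M / b₀ := by
      calc Real.exp (V x₀) ≤ Real.exp (⨍ y, V y ∂ν) := Real.exp_le_exp.mpr j1
        _ ≤ ⨍ y, Real.exp (V y) ∂ν := j2
        _ ≤ M / b₀ := havg_exp
    have hlog : V x₀ ≤ Real.log (M / b₀) := by
      have := (Real.log_le_log_iff (Real.exp_pos _) (by positivity)).mpr hfinal
      rwa [Real.log_exp] at this
    calc V x₀ ≤ Real.log (M / b₀) := hlog
      _ = Real.log M - Real.log b₀ := Real.log_div hMpos.ne' hb₀pos.ne'
      _ = Real.log ((2 * π) ^ ((d : ℝ) / 2)) + (‖x₀‖ + 1) ^ 2 / 2 - Real.log b₀ := by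
          rw [hM, Real.log_mul (by positivity) (Real.exp_pos _).ne', Real.log_exp]
      _ = (‖x₀‖ + 1) ^ 2 / 2 + C := by rw [hC]; ring
  -- quadratic upper bound
  have up : ∀ x : EuclideanSpace ℝ (Fin d), V x ≤ ‖x‖ ^ 2 + (1 + C) := by
    intro x
    have h1 := key x
    have h2 : (‖x‖ + 1) ^ 2 / 2 ≤ ‖x‖ ^ 2 + 1 := by nlinarith [sq_nonneg (‖x‖ - 1)]
    clear_value C b₀
    linarith
  -- lower bound via convexity
  have low : ∀ x : EuclideanSpace ℝ (Fin d), 2 * V 0 - (‖x‖ ^ 2 + (1 + C)) ≤ V x := by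
    intro x
    have h := hV.2 (Set.mem_univ x) (Set.mem_univ (-x))
      (by norm_num : (0:ℝ) ≤ (1/2:ℝ)) (by norm_num : (0:ℝ) ≤ (1/2:ℝ)) (by norm_num)
    have hmid : (1/2 : ℝ) • x + (1/2 : ℝ) • (-x) = 0 := by
      rw [smul_neg]; abel
    rw [hmid, smul_eq_mul, smul_eq_mul] at h
    have hup : V (-x) ≤ ‖x‖ ^ 2 + (1 + C) := by
      have := up (-x)
      rwa [norm_neg] at this
    linarith
  -- conclude
  set K : ℝ := 1 + C + 2 * |V 0| with hK
  apply Integrable.mono' (g := fun x => ‖x‖ ^ 2 + K) (hmom.add (integrable_const K))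
    hVcont.aestronglyMeasurable
  apply Filter.Eventually.of_forall
  intro x
  rw [Real.norm_eq_abs, abs_le]
  have h1 := low x
  have h2 := up x
  have habs1 : -|V 0| ≤ V 0 := neg_abs_le _
  have habs2 : V 0 ≤ |V 0| := le_abs_self _
  have habs3 : (0:ℝ) ≤ |V 0| := abs_nonneg _
  constructor <;> simp only [hK] <;> linarith
end

section
/- Let $\mu(dx) = e^{V(x)}\gamma_d(dx)$ and $\nu(dx) = e^{-W(x)}\gamma_d(dx)$ be probability measures with $V$ and $W$ convex. Then for every probability measure $\rho$ on $\mathbb{R}^d$ with $\rho \leq_c \nu$ (convex order) and such that $V+W$ is $\rho$- and $\nu$-integrable, one has $H(\rho|\mu) \geq H(\nu|\mu)$. -/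
open MeasureTheory Real ENNReal

/-- Relative entropy `H(α|β)`, valued in `[0,∞]`. -/
noncomputable def relEnt {X : Type*} [MeasurableSpace X] (α β : Measure X) : ℝ≥0∞ :=
  open scoped Classical in
  if α ≪ β ∧ Integrable (MeasureTheory.llr α β) α
    then ENNReal.ofReal (∫ x, MeasureTheory.llr α β x ∂α) else ⊤

/-- Convex order: `∫ f dη ≤ ∫ f dν` for every convex `f` integrable w.r.t. both. -/
def ConvexOrderLE {d : ℕ} (η ν : Measure (EuclideanSpace ℝ (Fin d))) : Prop :=
  ∀ f : EuclideanSpace ℝ (Fin d) → ℝ, ConvexOn ℝ Set.univ f →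
    Integrable f η → Integrable f ν → ∫ x, f x ∂η ≤ ∫ x, f x ∂ν

lemma kl_nonneg' {X : Type*} [MeasurableSpace X] (ρ ν : Measure X)
    [IsProbabilityMeasure ρ] [IsProbabilityMeasure ν] (h : ρ ≪ ν)
    (hint : Integrable (llr ρ ν) ρ) : 0 ≤ ∫ x, llr ρ ν x ∂ρ := by
  have hneg : Integrable (llr ν ρ) ρ := (integrable_congr (neg_llr h)).mp hint.neg
  have h1 : ∫ x, llr ν ρ x ∂ρ = - ∫ x, llr ρ ν x ∂ρ := by
    rw [← integral_neg]
    exact (integral_congr_ae (neg_llr h)).symm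
  have hb : llr ν ρ ≤ᵐ[ρ] fun x => (ν.rnDeriv ρ x).toReal - 1 := by
    filter_upwards [Measure.rnDeriv_pos' h, Measure.rnDeriv_lt_top ν ρ] with x hpos hlt
    exact Real.log_le_sub_one_of_pos (ENNReal.toReal_pos hpos.ne' hlt.ne)
  have h2 : ∫ x, llr ν ρ x ∂ρ ≤ 0 := by
    calc ∫ x, llr ν ρ x ∂ρ
        ≤ ∫ x, ((ν.rnDeriv ρ x).toReal - 1) ∂ρ :=
          integral_mono_ae hneg (Measure.integrable_toReal_rnDeriv.sub (integrable_const 1)) hb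
      _ = ∫ x, (ν.rnDeriv ρ x).toReal ∂ρ - 1 := by
          rw [integral_sub Measure.integrable_toReal_rnDeriv (integrable_const 1)]
          simp
      _ ≤ 0 := by
          have := Measure.setIntegral_toReal_rnDeriv_le (μ := ν) (ν := ρ)
            (s := Set.univ) (measure_ne_top ν Set.univ)
          simp only [setIntegral_univ, measure_univ, ENNReal.toReal_one, probReal_univ] at this
          linarith
  linarith

/-- If `μ = e^V γ_d` and `ν = e^{-W} γ_d` with `V, W` convex, then `H(ρ|μ) ≥ H(ν|μ)` for every
probability measure `ρ ≤_c ν` such that `V + W` is `ρ`- and `ν`-integrable. -/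
theorem stmt10 (d : ℕ) (V W : EuclideanSpace ℝ (Fin d) → ℝ)
    (hV : ConvexOn ℝ Set.univ V) (hW : ConvexOn ℝ Set.univ W)
    (μ ν ρ : Measure (EuclideanSpace ℝ (Fin d)))
    (hμ : μ = (stdGaussian d).withDensity (fun x => ENNReal.ofReal (Real.exp (V x))))
    (hν : ν = (stdGaussian d).withDensity (fun x => ENNReal.ofReal (Real.exp (-W x))))
    (hμp : IsProbabilityMeasure μ) (hνp : IsProbabilityMeasure ν)
    (hρp : IsProbabilityMeasure ρ)
    (horder : ConvexOrderLE ρ ν)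
    (hintρ : Integrable (fun x => V x + W x) ρ)
    (hintν : Integrable (fun x => V x + W x) ν) :
    relEnt ν μ ≤ relEnt ρ μ := by
  classical
  set f : EuclideanSpace ℝ (Fin d) → ℝ := fun x => -(V x + W x) with hf_def
  have hVc : Continuous V := continuousOn_univ.mp (hV.continuousOn isOpen_univ)
  have hWc : Continuous W := continuousOn_univ.mp (hW.continuousOn isOpen_univ)
  have hfc : Continuous f := ((hVc.add hWc).neg)
  -- ν = μ.withDensity (ofReal ∘ exp ∘ f)
  have h1 : ν = μ.withDensity (fun x => ENNReal.ofReal (Real.exp (f x))) := by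
    rw [hμ, hν, ← withDensity_mul _ (by fun_prop) (by fun_prop)]
    congr 1
    funext x
    simp only [Pi.mul_apply]
    rw [← ENNReal.ofReal_mul (Real.exp_nonneg _), ← Real.exp_add]
    congr 1
    simp only [hf_def]
    ring
  have h2 : μ = ν.withDensity (fun x => ENNReal.ofReal (Real.exp (V x + W x))) := by
    rw [hμ, hν, ← withDensity_mul _ (by fun_prop) (by fun_prop)]
    congr 1
    funext x
    simp only [Pi.mul_apply]
    rw [← ENNReal.ofReal_mul (Real.exp_nonneg _), ← Real.exp_add]
    congr 1
    ring
  have hνμ : ν ≪ μ := h1 ▸ withDensity_absolutelyContinuous _ _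
  have hμν : μ ≪ ν := h2 ▸ withDensity_absolutelyContinuous _ _
  -- lintegral of exp f w.r.t. μ is 1
  have hI1 : ∫⁻ x, ENNReal.ofReal (Real.exp (f x)) ∂μ = 1 := by
    have : ν Set.univ = 1 := measure_univ
    rw [h1, withDensity_apply _ MeasurableSet.univ, setLIntegral_univ] at this
    exact this
  have hexp_int : Integrable (fun x => Real.exp (f x)) μ := by
    refine ⟨hfc.rexp.aestronglyMeasurable, ?_⟩
    rw [hasFiniteIntegral_iff_ofReal (ae_of_all _ fun x => Real.exp_nonneg _)]
    rw [hI1]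
    exact one_lt_top
  have hIexp : ∫ x, Real.exp (f x) ∂μ = 1 := by
    rw [integral_eq_lintegral_of_nonneg_ae (ae_of_all _ fun x => Real.exp_nonneg _)
      hfc.rexp.aestronglyMeasurable, hI1]
    simp
  have htilt : μ.tilted f = ν := by
    rw [Measure.tilted, hIexp]
    simp only [div_one]
    exact h1.symm
  -- llr ν μ = f  ν-a.e.
  have hllrν : llr ν μ =ᵐ[ν] f := by
    have h0 : llr (μ.tilted f) μ =ᵐ[μ]
        fun x => f x - Real.log (∫ z, Real.exp (f z) ∂μ) + llr μ μ x :=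
      llr_tilted_left (Measure.AbsolutelyContinuous.refl μ) hexp_int hfc.aemeasurable
    rw [htilt] at h0
    have h0' : llr ν μ =ᵐ[μ] f := by
      filter_upwards [h0, Measure.rnDeriv_self μ] with x hx hx2
      rw [hx, llr, hx2, hIexp]
      simp
    exact hνμ.ae_le h0'
  have hint_llrν : Integrable (llr ν μ) ν :=
    (integrable_congr hllrν).mpr hintν.neg
  have hval_ν : relEnt ν μ = ENNReal.ofReal (∫ x, f x ∂ν) := by
    rw [relEnt, if_pos ⟨hνμ, hint_llrν⟩]
    congr 1
    exact integral_congr_ae hllrν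
  have hfρ_int : Integrable f ρ := hintρ.neg
  have hfν_int : Integrable f ν := hintν.neg
  by_cases hc : ρ ≪ μ ∧ Integrable (llr ρ μ) ρ
  · obtain ⟨hρμ, hint⟩ := hc
    rw [hval_ν, relEnt, if_pos ⟨hρμ, hint⟩]
    apply ENNReal.ofReal_le_ofReal
    have h_eq : ∫ x, llr ρ (μ.tilted f) x ∂ρ
        = ∫ x, llr ρ μ x ∂ρ - ∫ x, f x ∂ρ + Real.log (∫ x, Real.exp (f x) ∂μ) :=
      integral_llr_tilted_right hρμ hfρ_int hexp_int hint
    rw [htilt, hIexp, Real.log_one, add_zero] at h_eq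
    have h_int_ρν : Integrable (llr ρ ν) ρ := by
      have := integrable_llr_tilted_right hρμ hfρ_int hint hexp_int
      rwa [htilt] at this
    have h_nonneg : 0 ≤ ∫ x, llr ρ ν x ∂ρ :=
      kl_nonneg' ρ ν (hρμ.trans hμν) h_int_ρν
    have horder' : ∫ x, (V x + W x) ∂ρ ≤ ∫ x, (V x + W x) ∂ν :=
      horder _ (hV.add hW) hintρ hintν
    have hfρ : ∫ x, f x ∂ρ = - ∫ x, (V x + W x) ∂ρ := by
      simp only [hf_def]; rw [integral_neg]
    have hfν2 : ∫ x, f x ∂ν = - ∫ x, (V x + W x) ∂ν := by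
      simp only [hf_def]; rw [integral_neg]
    linarith [h_eq ▸ h_nonneg]
  · have hT : relEnt ρ μ = ⊤ := by rw [relEnt, if_neg hc]
    rw [hT]
    exact le_top
end
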